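/- If a,c ∈ ℝ with a+c>0 and a ≠ c, then 𝔠(a,c) = √2 · (a H(a/2) − c H(c/2)) / (a² − c²); and if a = c > 0, then 𝔠(a,a) = ((2+a²)/(2√2 a)) H(a/2) − 1/√(2π). -/

import Mathlib

open MeasureTheory Real Filter Topology

noncomputable section

/-- Transition kernel of Brownian motion killed at hitting zero (vanishing off `(0,∞)²`). -/
def gker (t x y : ℝ) : ℝ :=
  if 0 < x ∧ 0 < y then
    (Real.sqrt (2 * Real.pi * t))⁻¹ *
      (Real.exp (-(x - y) ^ 2 / (2 * t)) - Real.exp (-(x + y) ^ 2 / (2 * t)))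
  else 0

/-- Normalizing constant `𝔠(a,c)`. -/
def cAC (a c : ℝ) : ℝ :=
  ∫ p : ℝ × ℝ in Set.Ioi (0 : ℝ) ×ˢ Set.Ioi (0 : ℝ),
    Real.exp (-(c * p.1 + a * p.2) / Real.sqrt 2) * gker 1 p.1 p.2

/-- The complementary error function `erfc(x) = (2/√π) ∫_x^∞ e^{−t²} dt`. -/
def erfc (x : ℝ) : ℝ := 2 / Real.sqrt Real.pi * ∫ t in Set.Ioi x, Real.exp (-t ^ 2)

/-- `H(x) = e^{x²} erfc(x)`. -/
def Hfun (x : ℝ) : ℝ := Real.exp (x ^ 2) * erfc x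

namespace S12

open Set

def C0 : ℝ := (Real.sqrt (2 * Real.pi))⁻¹

def J (s : ℝ) : ℝ := ∫ v in Ioi (0:ℝ), Real.exp (-(s * v) - v ^ 2)

lemma Jfun_integrable (s : ℝ) : Integrable (fun v : ℝ => Real.exp (-(s * v) - v ^ 2)) := by
  have h : (fun v : ℝ => Real.exp (-(s * v) - v ^ 2))
      = fun v => Real.exp (s ^ 2 / 4) * Real.exp (-(1:ℝ) * (v + s / 2) ^ 2) := by
    funext v; rw [← Real.exp_add]; congr 1; ring
  rw [h]
  exact ((integrable_exp_neg_mul_sq one_pos).comp_add_right (s / 2)).const_mul _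

lemma setIntegral_Ioi_comp_add (f : ℝ → ℝ) (b d : ℝ) :
    ∫ x in Ioi b, f (x + d) = ∫ x in Ioi (b + d), f x := by
  have A : MeasurableEmbedding (fun x : ℝ => x + d) :=
    (Homeomorph.addRight d).measurableEmbedding
  have B := A.setIntegral_map (μ := volume) f (Ioi (b + d))
  rw [map_add_right_eq_self volume d] at B
  have hpre : (fun x : ℝ => x + d) ⁻¹' Ioi (b + d) = Ioi b := by
    ext x; simp only [mem_preimage, mem_Ioi]; constructor <;> intro h <;> linarith
  rw [hpre] at B
  exact B.symm

lemma J_eq (s : ℝ) : J s = Real.sqrt π / 2 * Hfun (s / 2) := by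
  have h1 : ∀ v : ℝ, Real.exp (-(s * v) - v ^ 2)
      = Real.exp (s ^ 2 / 4) * Real.exp (-(v + s / 2) ^ 2) := by
    intro v; rw [← Real.exp_add]; congr 1; ring
  rw [J]
  simp_rw [h1]
  rw [integral_const_mul]
  have h2 : ∫ v in Ioi (0:ℝ), Real.exp (-(v + s / 2) ^ 2)
      = ∫ t in Ioi (s / 2), Real.exp (-t ^ 2) := by
    have := setIntegral_Ioi_comp_add (fun t => Real.exp (-t ^ 2)) 0 (s / 2)
    simpa using this
  rw [h2]
  have hπ : Real.sqrt π ≠ 0 := by positivity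
  have herfc : ∫ t in Ioi (s / 2), Real.exp (-t ^ 2) = Real.sqrt π / 2 * erfc (s / 2) := by
    rw [erfc]; field_simp
  rw [herfc, Hfun]
  have : ((s / 2) ^ 2 : ℝ) = s ^ 2 / 4 := by ring
  rw [this]; ring

lemma exp_Ioi {α : ℝ} (b : ℝ) (hα : 0 < α) :
    ∫ u in Ioi b, Real.exp (-(α * u)) = Real.exp (-(α * b)) / α := by
  have h := MeasureTheory.integral_comp_mul_left_Ioi (fun x => Real.exp (-x)) b hα
  rw [integral_exp_neg_Ioi] at h
  calc ∫ u in Ioi b, Real.exp (-(α * u)) = α⁻¹ • Real.exp (-(α * b)) := h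
    _ = Real.exp (-(α * b)) / α := by rw [smul_eq_mul]; ring


lemma C0_pos : 0 < C0 := by rw [C0]; positivity

def cone : Set (ℝ × ℝ) := {p | -p.1 < p.2 ∧ p.2 < p.1}

lemma measurableSet_cone : MeasurableSet cone := by
  have : cone = {p : ℝ × ℝ | -p.1 < p.2} ∩ {p : ℝ × ℝ | p.2 < p.1} := rfl
  rw [this]
  exact (measurableSet_lt measurable_fst.neg measurable_snd).inter
    (measurableSet_lt measurable_snd measurable_fst)

lemma cone_fst_pos {p : ℝ × ℝ} (hp : p ∈ cone) : 0 < p.1 := by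
  obtain ⟨h1, h2⟩ := hp; linarith

def G1 (α β : ℝ) : ℝ × ℝ → ℝ :=
  cone.indicator fun p => C0 * Real.exp (-(α * p.1) - β * p.2 - p.2 ^ 2)

def G2 (α β : ℝ) : ℝ × ℝ → ℝ :=
  cone.indicator fun p => C0 * Real.exp (-(α * p.1) - β * p.2 - p.1 ^ 2)

def Bnd (α β : ℝ) : ℝ × ℝ → ℝ := fun p =>
  (Ioi (0:ℝ)).indicator (fun u => C0 * Real.exp (-(α / 2) * u)) p.1 *
    Real.exp (-(β * p.2) - p.2 ^ 2)


lemma Bnd_integrable {α : ℝ} (hα : 0 < α) (β : ℝ) : Integrable (Bnd α β) := by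
  unfold Bnd
  rw [Measure.volume_eq_prod]
  refine Integrable.mul_prod ?_ (Jfun_integrable β)
  refine IntegrableOn.integrable_indicator ?_ measurableSet_Ioi
  exact (exp_neg_integrableOn_Ioi 0 (by positivity : (0:ℝ) < α / 2)).const_mul C0

lemma Bnd_nonneg (α β : ℝ) (p : ℝ × ℝ) : 0 ≤ Bnd α β p := by
  refine mul_nonneg (Set.indicator_nonneg (fun u _ => ?_) _) (Real.exp_pos _).le
  exact mul_nonneg C0_pos.le (Real.exp_pos _).le

lemma norm_G1_le {α : ℝ} (hα : 0 < α) (β : ℝ) (p : ℝ × ℝ) : ‖G1 α β p‖ ≤ Bnd α β p := by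
  by_cases hp : p ∈ cone
  · have hu : 0 < p.1 := cone_fst_pos hp
    rw [G1, Set.indicator_of_mem hp, show Bnd α β p = (Ioi (0:ℝ)).indicator
      (fun u => C0 * Real.exp (-(α / 2) * u)) p.1 * Real.exp (-(β * p.2) - p.2 ^ 2) from rfl,
      Set.indicator_of_mem (mem_Ioi.2 hu)]
    rw [Real.norm_eq_abs, abs_of_pos (mul_pos C0_pos (Real.exp_pos _))]
    rw [mul_assoc, ← Real.exp_add]
    refine mul_le_mul_of_nonneg_left (Real.exp_le_exp.2 ?_) C0_pos.le
    nlinarith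
  · rw [G1, Set.indicator_of_notMem hp, norm_zero]
    exact Bnd_nonneg α β p

lemma norm_G2_le {α : ℝ} (hα : 0 < α) (β : ℝ) (p : ℝ × ℝ) : ‖G2 α β p‖ ≤ Bnd α β p := by
  by_cases hp : p ∈ cone
  · have hu : 0 < p.1 := cone_fst_pos hp
    obtain ⟨h1, h2⟩ := id hp
    rw [G2, Set.indicator_of_mem hp, show Bnd α β p = (Ioi (0:ℝ)).indicator
      (fun u => C0 * Real.exp (-(α / 2) * u)) p.1 * Real.exp (-(β * p.2) - p.2 ^ 2) from rfl,
      Set.indicator_of_mem (mem_Ioi.2 hu)]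
    rw [Real.norm_eq_abs, abs_of_pos (mul_pos C0_pos (Real.exp_pos _))]
    rw [mul_assoc, ← Real.exp_add]
    refine mul_le_mul_of_nonneg_left (Real.exp_le_exp.2 ?_) C0_pos.le
    nlinarith
  · rw [G2, Set.indicator_of_notMem hp, norm_zero]
    exact Bnd_nonneg α β p

lemma meas_G1 (α β : ℝ) : Measurable (G1 α β) := by
  refine Measurable.indicator ?_ measurableSet_cone
  fun_prop

lemma meas_G2 (α β : ℝ) : Measurable (G2 α β) := by
  refine Measurable.indicator ?_ measurableSet_cone
  fun_prop

lemma G1_integrable {α : ℝ} (hα : 0 < α) (β : ℝ) : Integrable (G1 α β) :=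
  (Bnd_integrable hα β).mono' (meas_G1 α β).aestronglyMeasurable
    (Filter.Eventually.of_forall (norm_G1_le hα β))

lemma G2_integrable {α : ℝ} (hα : 0 < α) (β : ℝ) : Integrable (G2 α β) :=
  (Bnd_integrable hα β).mono' (meas_G2 α β).aestronglyMeasurable
    (Filter.Eventually.of_forall (norm_G2_le hα β))


lemma G1_section (α β v : ℝ) :
    (fun u => G1 α β (u, v)) = (Ioi |v|).indicator
      (fun u => C0 * Real.exp (-(β * v) - v ^ 2) * Real.exp (-(α * u))) := by
  funext u
  by_cases h : |v| < u
  · rw [Set.indicator_of_mem (mem_Ioi.2 h), G1,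
      Set.indicator_of_mem (by exact abs_lt.1 h : (u, v) ∈ cone)]
    rw [mul_assoc, ← Real.exp_add]
    congr 2
    ring
  · rw [Set.indicator_of_notMem (by simpa using h), G1, Set.indicator_of_notMem]
    intro hc
    exact h (abs_lt.2 hc)

lemma absfun_integrable {α : ℝ} (hα : 0 ≤ α) (β : ℝ) :
    Integrable (fun v : ℝ => Real.exp (-(α * |v|) - β * v - v ^ 2)) := by
  refine (Jfun_integrable β).mono' ?_ (Filter.Eventually.of_forall fun v => ?_)
  · have : Continuous fun v : ℝ => Real.exp (-(α * |v|) - β * v - v ^ 2) := by fun_prop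
    exact this.aestronglyMeasurable
  · rw [Real.norm_eq_abs, abs_of_pos (Real.exp_pos _)]
    refine Real.exp_le_exp.2 ?_
    have : 0 ≤ α * |v| := mul_nonneg hα (abs_nonneg v)
    linarith

lemma G1_integral {α : ℝ} (hα : 0 < α) (β : ℝ) :
    ∫ p : ℝ × ℝ, G1 α β p = C0 / α * (J (α + β) + J (α - β)) := by
  have hG1 : Integrable (G1 α β) (volume.prod volume) := by
    rw [← Measure.volume_eq_prod]; exact G1_integrable hα β
  rw [Measure.volume_eq_prod, MeasureTheory.integral_prod_symm _ hG1]
  have inner : ∀ v : ℝ, (∫ u, G1 α β (u, v))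
      = C0 / α * Real.exp (-(α * |v|) - β * v - v ^ 2) := by
    intro v
    rw [G1_section α β v, MeasureTheory.integral_indicator measurableSet_Ioi,
      integral_const_mul, exp_Ioi |v| hα]
    rw [show -(α * |v|) - β * v - v ^ 2 = (-(β * v) - v ^ 2) + -(α * |v|) by ring,
      Real.exp_add]
    field_simp
  simp_rw [inner]
  rw [integral_const_mul]
  congr 1
  have hint := absfun_integrable hα.le β
  rw [← MeasureTheory.integral_add_compl (measurableSet_Ioi (a := (0:ℝ))) hint, compl_Ioi]
  have hA : ∫ v in Ioi (0:ℝ), Real.exp (-(α * |v|) - β * v - v ^ 2) = J (α + β) := by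
    rw [J]
    refine setIntegral_congr_fun measurableSet_Ioi fun v hv => ?_
    rw [abs_of_pos hv]
    congr 1
    ring
  have hB : ∫ v in Iic (0:ℝ), Real.exp (-(α * |v|) - β * v - v ^ 2) = J (α - β) := by
    have := integral_comp_neg_Ioi (0:ℝ)
      (fun v => Real.exp (-(α * |v|) - β * v - v ^ 2))
    rw [neg_zero] at this
    rw [← this, J]
    refine setIntegral_congr_fun measurableSet_Ioi fun v hv => ?_
    rw [abs_neg, abs_of_pos hv]
    congr 1
    ring
  rw [hA, hB, add_comm]

lemma G2_section {α β : ℝ} (u : ℝ) :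
    (fun v => G2 α β (u, v)) = (Ioo (-u) u).indicator
      (fun v => C0 * Real.exp (-(α * u) - u ^ 2) * Real.exp (-(β * v))) := by
  funext v
  by_cases h : v ∈ Ioo (-u) u
  · rw [Set.indicator_of_mem h, G2,
      Set.indicator_of_mem (by exact ⟨h.1, h.2⟩ : (u, v) ∈ cone)]
    rw [mul_assoc, ← Real.exp_add]
    congr 2
    ring
  · rw [Set.indicator_of_notMem h, G2, Set.indicator_of_notMem]
    intro hc
    exact h ⟨hc.1, hc.2⟩

lemma intervalExp {β : ℝ} (hβ : β ≠ 0) (u : ℝ) :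
    ∫ v in Ioo (-u) u, Real.exp (-(β * v))
      = if 0 < u then (Real.exp (β * u) - Real.exp (-(β * u))) / β else 0 := by
  by_cases hu : 0 < u
  · rw [if_pos hu, ← MeasureTheory.integral_Ioc_eq_integral_Ioo,
      ← intervalIntegral.integral_of_le (by linarith : -u ≤ u)]
    have h2 := intervalIntegral.integral_comp_mul_left (a := -u) (b := u)
      (fun x => Real.exp x) (neg_ne_zero.2 hβ)
    rw [integral_exp] at h2
    have h3 : ∀ v : ℝ, -β * v = -(β * v) := fun v => by ring
    simp_rw [h3] at h2
    rw [h2, smul_eq_mul, show -(β * -u) = β * u by ring]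
    ring
  · rw [if_neg hu]
    have : Ioo (-u) u = ∅ := Ioo_eq_empty (by intro h; push_neg at hu; nlinarith)
    rw [this]
    simp

lemma G2_integral {α β : ℝ} (hα : 0 < α) (hβ : β ≠ 0) :
    ∫ p : ℝ × ℝ, G2 α β p = C0 / β * (J (α - β) - J (α + β)) := by
  have hG2 : Integrable (G2 α β) (volume.prod volume) := by
    rw [← Measure.volume_eq_prod]; exact G2_integrable hα β
  rw [Measure.volume_eq_prod, MeasureTheory.integral_prod _ hG2]
  have inner : ∀ u : ℝ, (∫ v, G2 α β (u, v))
      = (Ioi (0:ℝ)).indicator (fun u => C0 / β * (Real.exp (-((α - β) * u) - u ^ 2)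
          - Real.exp (-((α + β) * u) - u ^ 2))) u := by
    intro u
    rw [G2_section u, MeasureTheory.integral_indicator measurableSet_Ioo, integral_const_mul,
      intervalExp hβ u]
    by_cases hu : 0 < u
    · rw [if_pos hu, Set.indicator_of_mem (mem_Ioi.2 hu)]
      rw [show C0 / β * (Real.exp (-((α - β) * u) - u ^ 2) - Real.exp (-((α + β) * u) - u ^ 2))
          = C0 / β * (Real.exp (-(α * u) - u ^ 2) * Real.exp (β * u)
            - Real.exp (-(α * u) - u ^ 2) * Real.exp (-(β * u))) by
        rw [← Real.exp_add, ← Real.exp_add]; congr 3 <;> ring]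
      field_simp
    · rw [if_neg hu, Set.indicator_of_notMem (by simpa using hu), mul_zero]
  simp_rw [inner]
  rw [MeasureTheory.integral_indicator measurableSet_Ioi, integral_const_mul]
  congr 1
  rw [MeasureTheory.integral_sub ((Jfun_integrable (α - β)).integrableOn)
    ((Jfun_integrable (α + β)).integrableOn)]
  rfl

lemma tendsto_negexp {α : ℝ} (hα : 0 < α) :
    Tendsto (fun u : ℝ => -Real.exp (-(α * u) - u ^ 2)) atTop (𝓝 0) := by
  rw [show (0:ℝ) = -0 by norm_num]
  refine Filter.Tendsto.neg ?_
  refine Real.tendsto_exp_atBot.comp ?_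
  have h0 : Tendsto (fun u : ℝ => α * u + u ^ 2) atTop atTop := by
    apply Filter.Tendsto.atTop_add_atTop
    · exact Filter.Tendsto.const_mul_atTop hα tendsto_id
    · exact tendsto_pow_atTop (two_ne_zero)
  have : (fun u : ℝ => -(α * u) - u ^ 2) = fun u => -(α * u + u ^ 2) := by funext u; ring
  rw [this]
  exact tendsto_neg_atBot_iff.2 h0

lemma deriv_negexp {α : ℝ} (x : ℝ) :
    HasDerivAt (fun u : ℝ => -Real.exp (-(α * u) - u ^ 2))
      ((α + 2 * x) * Real.exp (-(α * x) - x ^ 2)) x := by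
  have h1 : HasDerivAt (fun u : ℝ => -(α * u) - u ^ 2) (-α - 2 * x) x := by
    have := ((hasDerivAt_id x).const_mul α).neg.sub (hasDerivAt_pow 2 x)
    exact this.congr_deriv (by norm_num)
  have h2 := h1.exp
  have h3 := h2.neg
  exact h3.congr_deriv (by ring)

lemma integrableOn_mul_exp {α : ℝ} (hα : 0 < α) :
    IntegrableOn (fun u : ℝ => (α + 2 * u) * Real.exp (-(α * u) - u ^ 2)) (Ioi 0) := by
  have h1 : IntegrableOn (fun u : ℝ => α * Real.exp (-(α * u) - u ^ 2)) (Ioi 0) :=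
    ((Jfun_integrable α).const_mul α).integrableOn
  have h2 : IntegrableOn (fun u : ℝ => 2 * u * Real.exp (-(α * u) - u ^ 2)) (Ioi 0) := by
    refine ((Jfun_integrable (α - 1)).const_mul 2).integrableOn.mono' ?_ ?_
    · have : Continuous fun u : ℝ => 2 * u * Real.exp (-(α * u) - u ^ 2) := by fun_prop
      exact this.aestronglyMeasurable
    · rw [ae_restrict_iff' measurableSet_Ioi]
      refine Filter.Eventually.of_forall fun u hu => ?_
      have hu' : 0 < u := hu
      rw [Real.norm_eq_abs, abs_of_nonneg (by positivity)]
      have hue : u ≤ Real.exp u := by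
        have := Real.add_one_le_exp u; linarith
      calc 2 * u * Real.exp (-(α * u) - u ^ 2)
          ≤ 2 * Real.exp u * Real.exp (-(α * u) - u ^ 2) := by
            refine mul_le_mul_of_nonneg_right ?_ (Real.exp_pos _).le
            linarith
        _ = 2 * Real.exp (-((α - 1) * u) - u ^ 2) := by
            rw [mul_assoc, ← Real.exp_add]; congr 2; ring
  have h4 := h1.add h2
  refine h4.congr ?_
  refine Filter.Eventually.of_forall fun u => ?_
  simp only [Pi.add_apply]
  ring

lemma Ktot {α : ℝ} (hα : 0 < α) :
    ∫ u in Ioi (0:ℝ), (α + 2 * u) * Real.exp (-(α * u) - u ^ 2) = 1 := by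
  have := MeasureTheory.integral_Ioi_of_hasDerivAt_of_tendsto
    (f := fun u : ℝ => -Real.exp (-(α * u) - u ^ 2))
    (f' := fun u : ℝ => (α + 2 * u) * Real.exp (-(α * u) - u ^ 2))
    (a := 0) (m := 0)
    (by fun_prop : Continuous fun u : ℝ => -Real.exp (-(α * u) - u ^ 2)).continuousWithinAt
    (fun x _ => deriv_negexp x) (integrableOn_mul_exp hα) (tendsto_negexp hα)
  rw [this]
  norm_num

lemma Kval {α : ℝ} (hα : 0 < α) :
    ∫ u in Ioi (0:ℝ), 2 * u * Real.exp (-(α * u) - u ^ 2) = 1 - α * J α := by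
  have h1 : IntegrableOn (fun u : ℝ => α * Real.exp (-(α * u) - u ^ 2)) (Ioi 0) :=
    ((Jfun_integrable α).const_mul α).integrableOn
  have h2 := integrableOn_mul_exp hα
  have h3 := MeasureTheory.integral_sub h2 h1
  rw [Ktot hα] at h3
  have h4 : ∫ u in Ioi (0:ℝ), α * Real.exp (-(α * u) - u ^ 2) = α * J α := by
    rw [integral_const_mul]; rfl
  rw [h4] at h3
  rw [← h3]
  congr 1
  funext u
  ring

lemma G2_integral0 {α : ℝ} (hα : 0 < α) :
    ∫ p : ℝ × ℝ, G2 α 0 p = C0 * (1 - α * J α) := by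
  have hG2 : Integrable (G2 α 0) (volume.prod volume) := by
    rw [← Measure.volume_eq_prod]; exact G2_integrable hα 0
  rw [Measure.volume_eq_prod, MeasureTheory.integral_prod _ hG2]
  have inner : ∀ u : ℝ, (∫ v, G2 α 0 (u, v))
      = (Ioi (0:ℝ)).indicator
          (fun u => C0 * Real.exp (-(α * u) - u ^ 2) * (2 * u)) u := by
    intro u
    rw [G2_section u, MeasureTheory.integral_indicator measurableSet_Ioo, integral_const_mul]
    have hone : ∀ v : ℝ, Real.exp (-((0:ℝ) * v)) = 1 := fun v => by norm_num
    simp_rw [hone]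
    rw [MeasureTheory.setIntegral_const]
    by_cases hu : 0 < u
    · rw [Set.indicator_of_mem (mem_Ioi.2 hu), Real.volume_real_Ioo_of_le (by linarith), smul_eq_mul, mul_one]
      ring
    · rw [Set.indicator_of_notMem (by simpa using hu)]
      have : Ioo (-u) u = ∅ := Ioo_eq_empty (by intro h; push_neg at hu; nlinarith)
      rw [this]
      simp
  simp_rw [inner]
  rw [MeasureTheory.integral_indicator measurableSet_Ioi]
  rw [← Kval hα, ← integral_const_mul]
  congr 1
  funext u
  ring

section T


def Tlin : (ℝ × ℝ) →ₗ[ℝ] (ℝ × ℝ) where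
  toFun p := ((p.1 + p.2) / Real.sqrt 2, (p.1 - p.2) / Real.sqrt 2)
  map_add' p q := by
    simp only [Prod.fst_add, Prod.snd_add, Prod.mk_add_mk, Prod.mk.injEq]
    constructor <;> ring
  map_smul' r p := by
    simp only [Prod.smul_fst, Prod.smul_snd, smul_eq_mul, Prod.smul_mk, RingHom.id_apply,
      Prod.mk.injEq]
    constructor <;> ring

lemma Tlin_det : LinearMap.det Tlin = -1 := by
  have hs : (Real.sqrt 2) ^ 2 = 2 := Real.sq_sqrt (by norm_num)
  have hs0 : Real.sqrt 2 ≠ 0 := by positivity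
  rw [← LinearMap.det_toMatrix (Module.Basis.finTwoProd ℝ), Matrix.det_fin_two]
  simp [LinearMap.toMatrix_apply, Tlin, Module.Basis.finTwoProd]
  field_simp
  norm_num

lemma Tlin_measurePreserving : MeasurePreserving (⇑Tlin) (volume : Measure (ℝ × ℝ)) volume := by
  constructor
  · exact (LinearMap.continuous_of_finiteDimensional Tlin).measurable
  · rw [Measure.map_linearMap_addHaar_eq_smul_addHaar volume (by rw [Tlin_det]; norm_num)]
    rw [Tlin_det]
    norm_num

lemma Tlin_integral (f : ℝ × ℝ → ℝ) (hf : AEStronglyMeasurable f (volume : Measure (ℝ × ℝ))) :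
    ∫ p, f p = ∫ q, f (Tlin q) := by
  rw [← Tlin_measurePreserving.map_eq] at hf
  conv_lhs => rw [← Tlin_measurePreserving.map_eq]
  exact integral_map Tlin_measurePreserving.measurable.aemeasurable hf


end T

def fInt (a c : ℝ) : ℝ × ℝ → ℝ := fun p =>
  Real.exp (-(c * p.1 + a * p.2) / Real.sqrt 2) * gker 1 p.1 p.2

lemma meas_fInt (a c : ℝ) : Measurable (fInt a c) := by
  refine Measurable.mul (by fun_prop) ?_
  have : (fun p : ℝ × ℝ => gker 1 p.1 p.2) = fun p : ℝ × ℝ =>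
      if p ∈ {q : ℝ × ℝ | 0 < q.1 ∧ 0 < q.2} then
        (Real.sqrt (2 * Real.pi * 1))⁻¹ *
          (Real.exp (-(p.1 - p.2) ^ 2 / (2 * 1)) - Real.exp (-(p.1 + p.2) ^ 2 / (2 * 1)))
      else 0 := rfl
  rw [this]
  refine Measurable.ite ?_ (by fun_prop) measurable_const
  exact (measurableSet_lt measurable_const measurable_fst).inter
    (measurableSet_lt measurable_const measurable_snd)

lemma cAC_repr (a c : ℝ) : cAC a c = ∫ p : ℝ × ℝ, fInt a c p := by
  rw [cAC]
  refine setIntegral_eq_integral_of_forall_compl_eq_zero fun p hp => ?_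
  have : ¬(0 < p.1 ∧ 0 < p.2) := by
    intro h
    exact hp (Set.mk_mem_prod h.1 h.2)
  show Real.exp _ * gker 1 p.1 p.2 = 0
  rw [gker, if_neg this, mul_zero]

lemma fInt_comp (a c : ℝ) (q : ℝ × ℝ) :
    fInt a c (Tlin q) = G1 ((a + c) / 2) ((c - a) / 2) q - G2 ((a + c) / 2) ((c - a) / 2) q := by
  obtain ⟨u, v⟩ := q
  have hs : (0:ℝ) < Real.sqrt 2 := by positivity
  have hs2 : (Real.sqrt 2) ^ 2 = 2 := Real.sq_sqrt (by norm_num)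
  have hs0 : Real.sqrt 2 ≠ 0 := ne_of_gt hs
  have hT : Tlin (u, v) = ((u + v) / Real.sqrt 2, (u - v) / Real.sqrt 2) := rfl
  rw [hT]
  have hcond : (0 < (u + v) / Real.sqrt 2 ∧ 0 < (u - v) / Real.sqrt 2) ↔ ((u, v) ∈ cone) := by
    rw [lt_div_iff₀ hs, lt_div_iff₀ hs, zero_mul]
    constructor
    · rintro ⟨h1, h2⟩; exact ⟨by linarith, by linarith⟩
    · rintro ⟨h1, h2⟩
      have h1' : -u < v := h1
      have h2' : v < u := h2
      exact ⟨by linarith, by linarith⟩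
  by_cases hc : (u, v) ∈ cone
  · have hcond' := hcond.2 hc
    rw [fInt]
    simp only []
    rw [gker, if_pos hcond', mul_one]
    rw [G1, G2, Set.indicator_of_mem hc, Set.indicator_of_mem hc]
    have hE : -(c * ((u + v) / Real.sqrt 2) + a * ((u - v) / Real.sqrt 2)) / Real.sqrt 2
        = -((a + c) / 2 * u) - (c - a) / 2 * v := by
      rw [div_eq_iff hs0]
      field_simp
      linear_combination (c*u + c*v + a*u - a*v) * hs2
    have hA : -((u + v) / Real.sqrt 2 - (u - v) / Real.sqrt 2) ^ 2 / (2 * 1) = -v ^ 2 := by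
      rw [div_sub_div_same, show u + v - (u - v) = 2 * v by ring, div_pow, hs2]
      ring
    have hB : -((u + v) / Real.sqrt 2 + (u - v) / Real.sqrt 2) ^ 2 / (2 * 1) = -u ^ 2 := by
      rw [← add_div, show u + v + (u - v) = 2 * u by ring, div_pow, hs2]
      ring
    rw [hE, hA, hB]
    show _ = C0 * Real.exp (-((a + c) / 2 * u) - (c - a) / 2 * v - v ^ 2)
        - C0 * Real.exp (-((a + c) / 2 * u) - (c - a) / 2 * v - u ^ 2)
    have h1 : Real.exp (-((a + c) / 2 * u) - (c - a) / 2 * v - v ^ 2)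
        = Real.exp (-((a + c) / 2 * u) - (c - a) / 2 * v) * Real.exp (-v ^ 2) := by
      rw [← Real.exp_add]; congr 1
    have h2 : Real.exp (-((a + c) / 2 * u) - (c - a) / 2 * v - u ^ 2)
        = Real.exp (-((a + c) / 2 * u) - (c - a) / 2 * v) * Real.exp (-u ^ 2) := by
      rw [← Real.exp_add]; congr 1
    rw [h1, h2, C0]
    ring
  · rw [fInt]
    simp only []
    rw [gker, if_neg (fun h => hc (hcond.1 h)), mul_zero]
    rw [G1, G2, Set.indicator_of_notMem hc, Set.indicator_of_notMem hc, sub_zero]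

lemma cAC_eq {a c : ℝ} (h : 0 < a + c) :
    cAC a c = (∫ p : ℝ × ℝ, G1 ((a + c) / 2) ((c - a) / 2) p)
      - ∫ p : ℝ × ℝ, G2 ((a + c) / 2) ((c - a) / 2) p := by
  have hα : 0 < (a + c) / 2 := by linarith
  rw [cAC_repr, Tlin_integral (fInt a c) (meas_fInt a c).aestronglyMeasurable]
  have : (fun q => fInt a c (Tlin q))
      = fun q => G1 ((a + c) / 2) ((c - a) / 2) q - G2 ((a + c) / 2) ((c - a) / 2) q := by
    funext q; exact fInt_comp a c q
  rw [this]
  exact MeasureTheory.integral_sub (G1_integrable hα _) (G2_integrable hα _)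

end S12

theorem statement12 (a c : ℝ) :
    (0 < a + c → a ≠ c →
      cAC a c = Real.sqrt 2 * (a * Hfun (a / 2) - c * Hfun (c / 2)) / (a ^ 2 - c ^ 2)) ∧
    (0 < a →
      cAC a a = (2 + a ^ 2) / (2 * Real.sqrt 2 * a) * Hfun (a / 2) -
        1 / Real.sqrt (2 * Real.pi)) := by
  have hs0 : Real.sqrt 2 ≠ 0 := by positivity
  have hs2 : (Real.sqrt 2) ^ 2 = 2 := Real.sq_sqrt (by norm_num)
  have hπ0 : Real.sqrt π ≠ 0 := by positivity
  have h2π : Real.sqrt (2 * π) = Real.sqrt 2 * Real.sqrt π := Real.sqrt_mul (by norm_num) _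
  constructor
  · intro h hne
    have hα : 0 < (a + c) / 2 := by linarith
    have hβ : (c - a) / 2 ≠ 0 := fun hh => hne (by linarith)
    have hac : a + c ≠ 0 := by linarith
    have hca : c - a ≠ 0 := fun hh => hne (by linarith)
    have hsq : a ^ 2 - c ^ 2 ≠ 0 := by
      intro hh
      have : (a + c) * (a - c) = 0 := by linarith [hh]
      rcases mul_eq_zero.1 this with h1 | h1
      · exact hac h1
      · exact hca (by linarith)
    rw [S12.cAC_eq h, S12.G1_integral hα _, S12.G2_integral hα hβ]
    rw [show (a + c) / 2 + (c - a) / 2 = c by ring, show (a + c) / 2 - (c - a) / 2 = a by ring]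
    rw [S12.J_eq, S12.J_eq, S12.C0, h2π]
    field_simp
    ring_nf
    linear_combination (-1 *
      (c * Hfun (c * (1/2)) * a ^ 2 + c ^ 2 * a * Hfun (a * (1/2))
        - c ^ 3 * Hfun (c * (1/2)) - a ^ 3 * Hfun (a * (1/2)))) * hs2
  · intro ha
    have h : 0 < a + a := by linarith
    have ha0 : a ≠ 0 := ne_of_gt ha
    rw [S12.cAC_eq h]
    rw [show (a + a) / 2 = a by ring, show (a - a) / 2 = (0:ℝ) by ring]
    rw [S12.G1_integral ha 0, S12.G2_integral0 ha]
    rw [add_zero, sub_zero, S12.J_eq, S12.C0, h2π]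
    field_simp
    ring_nf
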